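/- arXiv:1605.06596 — 2 statements merged into one kernel-verified Lean document; each statement's English description precedes it below -/
import Mathlib

section
/- Let Q be a finite quiver with involution σ and duality structure (s, τ), and let θ : ℤ^{Q_0} → ℤ be a σ-compatible stability. A self-dual representation M of Q is σ-semistable if and only if M is semistable as an ordinary representation. (Note that the dimension vector of a self-dual representation is σ-invariant, so θ(dim M) = 0 and the slope of a nonzero self-dual representation is 0.) -/
open scoped BigOperators

/-- A finite quiver. -/
structure FinQuiver where
  V : Type
  A : Type
  [fintypeV : Fintype V]
  [fintypeA : Fintype A]
  [decEqV : DecidableEq V]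
  [decEqA : DecidableEq A]
  src : A → V
  tgt : A → V

attribute [instance] FinQuiver.fintypeV FinQuiver.fintypeA FinQuiver.decEqV FinQuiver.decEqA

/-- A finite-dimensional complex representation of a quiver. -/
structure QRep (Q : FinQuiver) where
  carrier : Q.V → Type
  [acg : ∀ i, AddCommGroup (carrier i)]
  [mod : ∀ i, Module ℂ (carrier i)]
  [fd : ∀ i, FiniteDimensional ℂ (carrier i)]
  map : ∀ a : Q.A, carrier (Q.src a) →ₗ[ℂ] carrier (Q.tgt a)

attribute [instance] QRep.acg QRep.mod QRep.fd

namespace QRep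

variable {Q : FinQuiver}

/-- A family of subspaces of a representation. -/
abbrev SubFam (X : QRep Q) := ∀ i, Submodule ℂ (X.carrier i)

/-- The family of subspaces is a subrepresentation: it is stable under all structure maps. -/
def IsSubRep (X : QRep Q) (V : X.SubFam) : Prop :=
  ∀ a : Q.A, ∀ x ∈ V (Q.src a), X.map a x ∈ V (Q.tgt a)

/-- Dimension vector (with values in `ℤ`) of a family of subspaces. -/
noncomputable def dimZ {X : QRep Q} (V : X.SubFam) : Q.V → ℤ :=
  fun i => (Module.finrank ℂ (V i) : ℤ)

/-- Dimension vector (with values in `ℤ`) of a representation. -/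
noncomputable def dimVecZ (X : QRep Q) : Q.V → ℤ :=
  fun i => (Module.finrank ℂ (X.carrier i) : ℤ)

/-- The slope of a dimension vector with respect to a stability `θ`. -/
noncomputable def slope (θ : (Q.V → ℤ) →+ ℤ) (d : Q.V → ℤ) : ℚ :=
  (θ d : ℚ) / ((∑ i, d i : ℤ) : ℚ)

/-- A representation is semistable when every nonzero subrepresentation has slope at most
the slope of the representation. -/
def Semistable (θ : (Q.V → ℤ) →+ ℤ) (X : QRep Q) : Prop :=
  ∀ V : X.SubFam, X.IsSubRep V → V ≠ ⊥ → slope θ (dimZ V) ≤ slope θ X.dimVecZ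

/-- Cast along an equality of vertices. -/
def castEquiv (X : QRep Q) {i j : Q.V} (h : i = j) : X.carrier i ≃ₗ[ℂ] X.carrier j := by
  subst h; exact LinearEquiv.refl ℂ _

end QRep

/-- An involution of a quiver. -/
structure QInv (Q : FinQuiver) where
  onV : Q.V → Q.V
  onA : Q.A → Q.A
  invV : ∀ i, onV (onV i) = i
  invA : ∀ a, onA (onA a) = a
  src_onA : ∀ a, Q.src (onA a) = onV (Q.tgt a)
  tgt_onA : ∀ a, Q.tgt (onA a) = onV (Q.src a)
  fix_onA : ∀ a, Q.tgt a = onV (Q.src a) → onA a = a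

/-- A duality structure on a quiver with involution. -/
structure Duality (Q : FinQuiver) (σ : QInv Q) where
  s : Q.V → ℤ
  τ : Q.A → ℤ
  s_pm : ∀ i, s i = 1 ∨ s i = -1
  τ_pm : ∀ a, τ a = 1 ∨ τ a = -1
  s_inv : ∀ i, s (σ.onV i) = s i
  ττ : ∀ a, τ a * τ (σ.onA a) = s (Q.src a) * s (Q.tgt a)

namespace QRep

variable {Q : FinQuiver}

/-- A stability is σ-compatible if `θ ∘ σ = -θ`. -/
def SigmaCompatible (σ : QInv Q) (θ : (Q.V → ℤ) →+ ℤ) : Prop :=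
  ∀ d : Q.V → ℤ, θ (fun i => d (σ.onV i)) = - θ d

/-- The dual representation `S(U)`, with `S(U)_i = (U_{σ(i)})^*` and
`S(u)_α = τ_α ⬝ (u_{σ(α)})^∨`. -/
noncomputable def dualRep (σ : QInv Q) (D : Duality Q σ) (X : QRep Q) : QRep Q where
  carrier := fun i => Module.Dual ℂ (X.carrier (σ.onV i))
  map := fun a => (D.τ a : ℂ) •
    (((X.castEquiv (σ.src_onA a)).dualMap.symm.toLinearMap).comp
      (((X.map (σ.onA a)).dualMap).comp
        ((X.castEquiv (σ.tgt_onA a)).dualMap.toLinearMap)))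

end QRep

namespace QRep

variable {Q : FinQuiver}

/-- Bilinear forms on the total space `⊕ᵢ Xᵢ` of a representation. -/
abbrev Bilin (X : QRep Q) := (∀ i, X.carrier i) →ₗ[ℂ] (∀ i, X.carrier i) →ₗ[ℂ] ℂ

/-- Nondegeneracy of a bilinear form. -/
def Nondeg (X : QRep Q) (B : X.Bilin) : Prop := ∀ x, (∀ y, B x y = 0) → x = 0

/-- Condition (i) for a self-dual representation: `M_i` and `M_j` are orthogonal
unless `i = σ(j)` (equivalently `j = σ(i)`). -/
def sdOrthBlocks (σ : QInv Q) (X : QRep Q) (B : X.Bilin) : Prop :=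
  ∀ i j, j ≠ σ.onV i → ∀ (x : X.carrier i) (y : X.carrier j),
    B (Pi.single i x) (Pi.single j y) = 0

/-- Condition (ii) for a self-dual representation: `⟨x, x'⟩ = s_i ⟨x', x⟩` on
`M_i + M_{σ(i)}`. -/
def sdSymm (σ : QInv Q) (D : Duality Q σ) (X : QRep Q) (B : X.Bilin) : Prop :=
  ∀ i (x : X.carrier i) (y : X.carrier (σ.onV i)),
    B (Pi.single i x) (Pi.single (σ.onV i) y)
      = (D.s i : ℂ) * B (Pi.single (σ.onV i) y) (Pi.single i x)

/-- Condition (iii) for a self-dual representation: `⟨m_α x, x'⟩ = τ_α ⟨x, m_{σ(α)} x'⟩`. -/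
def sdArrow (σ : QInv Q) (D : Duality Q σ) (X : QRep Q) (B : X.Bilin) : Prop :=
  ∀ (a : Q.A) (x : X.carrier (Q.src a)) (y : X.carrier (σ.onV (Q.tgt a))),
    B (Pi.single (Q.tgt a) (X.map a x)) (Pi.single (σ.onV (Q.tgt a)) y)
      = (D.τ a : ℂ) * B (Pi.single (Q.src a) x)
          (Pi.single (Q.tgt (σ.onA a)) (X.map (σ.onA a) (X.castEquiv (σ.src_onA a).symm y)))

/-- The bilinear form `B` makes `X` a self-dual representation. -/
def IsSelfDualForm (σ : QInv Q) (D : Duality Q σ) (X : QRep Q) (B : X.Bilin) : Prop :=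
  Nondeg X B ∧ sdOrthBlocks σ X B ∧ sdSymm σ D X B ∧ sdArrow σ D X B

/-- The orthogonal `U^⊥` of a family of subspaces:
`U^⊥_i = {m ∈ M_i : ⟨m, x⟩ = 0 for all x ∈ U_{σ(i)}}`. -/
noncomputable def orthFam (σ : QInv Q) (X : QRep Q) (B : X.Bilin) (U : X.SubFam) : X.SubFam :=
  fun i => ⨅ y : (U (σ.onV i)),
    LinearMap.ker ((B.comp (LinearMap.single ℂ X.carrier i)).flip
      (Pi.single (σ.onV i) (y : X.carrier (σ.onV i))))

/-- A family of subspaces is isotropic if `U ≤ U^⊥`. -/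
def IsotropicFam (σ : QInv Q) (X : QRep Q) (B : X.Bilin) (U : X.SubFam) : Prop :=
  U ≤ orthFam σ X B U

/-- σ-semistability of a self-dual representation: every nonzero isotropic
subrepresentation has slope at most `0`. -/
def SigmaSemistable (σ : QInv Q) (θ : (Q.V → ℤ) →+ ℤ) (X : QRep Q) (B : X.Bilin) : Prop :=
  ∀ U : X.SubFam, X.IsSubRep U → IsotropicFam σ X B U → U ≠ ⊥ → slope θ (dimZ U) ≤ 0

end QRep

/-! A subrepresentation `U` of a self-dual `M` need not be isotropic, but `U ∩ U^⊥` is, and it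
has the same `θ`-weight as `U`. Indeed `dim U^⊥_i = dim M_i - dim U_{σ(i)}`, so σ-compatibility
gives `θ(U^⊥) = θ(U)` for every family `U`; since `U^⊥⊥ = U`, applying this to `U + U^⊥`, whose
orthogonal is `U ∩ U^⊥`, and using `dim (U + U^⊥) + dim (U ∩ U^⊥) = dim U + dim U^⊥` yields
`θ(U ∩ U^⊥) = θ(U)`. As `θ(dim M) = 0`, testing semistability of `M` reduces to isotropic
subrepresentations. -/

namespace QRep

variable {Q : FinQuiver}

@[simp]
lemma single_castEquiv (X : QRep Q) {i j : Q.V} (h : i = j) (x : X.carrier i) :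
    Pi.single j (X.castEquiv h x) = Pi.single i x := by
  subst h; rfl

lemma castEquiv_mem {X : QRep Q} (U : X.SubFam) {i j : Q.V} (h : i = j) {x : X.carrier i}
    (hx : x ∈ U i) : X.castEquiv h x ∈ U j := by
  subst h; exact hx

lemma dimZ_bot (X : QRep Q) : dimZ (⊥ : X.SubFam) = 0 := by
  funext i
  simp [dimZ]

lemma dimZ_sup_add_dimZ_inf {X : QRep Q} (U V : X.SubFam) :
    dimZ (U ⊔ V) + dimZ (U ⊓ V) = dimZ U + dimZ V := by
  funext i
  simp only [Pi.add_apply, dimZ]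
  exact_mod_cast Submodule.finrank_sup_add_finrank_inf_eq (U i) (V i)

lemma sum_dimZ_pos {X : QRep Q} {U : X.SubFam} (h : U ≠ ⊥) : 0 < ∑ i, dimZ U i := by
  obtain ⟨i, hi⟩ := Function.ne_iff.mp h
  refine Finset.sum_pos' (fun j _ => by simp only [dimZ]; positivity) ⟨i, Finset.mem_univ i, ?_⟩
  exact Nat.cast_pos.2 (Nat.pos_of_ne_zero fun h0 => hi (Submodule.finrank_eq_zero.1 h0))

lemma slope_dimZ_nonpos_iff (θ : (Q.V → ℤ) →+ ℤ) {X : QRep Q} {U : X.SubFam} (h : U ≠ ⊥) :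
    slope θ (dimZ U) ≤ 0 ↔ θ (dimZ U) ≤ 0 := by
  have hpos : (0 : ℚ) < ((∑ i, dimZ U i : ℤ) : ℚ) := by exact_mod_cast sum_dimZ_pos h
  rw [slope, div_le_iff₀ hpos, zero_mul, Int.cast_nonpos]

section Orthogonal

variable {σ : QInv Q} {D : Duality Q σ} {X : QRep Q} {B : X.Bilin}

lemma mem_orthFam {U : X.SubFam} {i : Q.V} {x : X.carrier i} :
    x ∈ orthFam σ X B U i ↔
      ∀ y ∈ U (σ.onV i), B (Pi.single i x) (Pi.single (σ.onV i) y) = 0 := by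
  simp [orthFam, Submodule.mem_iInf]

lemma orthFam_antitone : Antitone (orthFam σ X B) :=
  fun _ _ h _ _ hx => mem_orthFam.2 fun y hy => mem_orthFam.1 hx y (h _ hy)

lemma orthFam_sup (U V : X.SubFam) :
    orthFam σ X B (U ⊔ V) = orthFam σ X B U ⊓ orthFam σ X B V := by
  refine le_antisymm (le_inf (orthFam_antitone le_sup_left) (orthFam_antitone le_sup_right)) ?_
  rintro i x ⟨hU, hV⟩
  refine mem_orthFam.2 fun y hy => ?_
  obtain ⟨u, hu, v, hv, rfl⟩ := Submodule.mem_sup.1 hy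
  rw [Pi.single_add, map_add, mem_orthFam.1 hU u hu, mem_orthFam.1 hV v hv, add_zero]

lemma le_orthFam_orthFam (hs : sdSymm σ D X B) (U : X.SubFam) :
    U ≤ orthFam σ X B (orthFam σ X B U) := by
  intro i x hx
  refine mem_orthFam.2 fun y hy => ?_
  have h := mem_orthFam.1 hy (X.castEquiv (σ.invV i).symm x) (castEquiv_mem U _ hx)
  rw [single_castEquiv] at h
  rw [hs i x y, h, mul_zero]

lemma isSubRep_orthFam (ha : sdArrow σ D X B) {U : X.SubFam} (hU : X.IsSubRep U) :
    X.IsSubRep (orthFam σ X B U) := by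
  intro a x hx
  refine mem_orthFam.2 fun y hy => ?_
  have hmap := hU (σ.onA a) _ (castEquiv_mem U (σ.src_onA a).symm hy)
  rw [ha a x y, ← single_castEquiv X (σ.tgt_onA a),
    mem_orthFam.1 hx _ (castEquiv_mem U (σ.tgt_onA a) hmap), mul_zero]

lemma isSubRep_inf_orthFam (ha : sdArrow σ D X B) {U : X.SubFam} (hU : X.IsSubRep U) :
    X.IsSubRep (U ⊓ orthFam σ X B U) :=
  fun a x hx => ⟨hU a x hx.1, isSubRep_orthFam ha hU a x hx.2⟩

lemma isotropicFam_inf_orthFam (U : X.SubFam) : IsotropicFam σ X B (U ⊓ orthFam σ X B U) :=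
  inf_le_right.trans (orthFam_antitone inf_le_left)

variable (σ B) in
noncomputable def pairing (i : Q.V) : X.carrier i →ₗ[ℂ] Module.Dual ℂ (X.carrier (σ.onV i)) :=
  (B.comp (LinearMap.single ℂ X.carrier i)).compl₂ (LinearMap.single ℂ X.carrier (σ.onV i))

lemma pairing_apply (i : Q.V) (x : X.carrier i) (y : X.carrier (σ.onV i)) :
    pairing σ B i x y = B (Pi.single i x) (Pi.single (σ.onV i) y) := rfl

lemma pairing_injective (hnd : Nondeg X B) (hblk : sdOrthBlocks σ X B) (i : Q.V) :
    Function.Injective (pairing σ B i) := by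
  rw [injective_iff_map_eq_zero]
  intro x hx
  have hB : ∀ z, B (Pi.single i x) z = 0 := by
    intro z
    rw [← Finset.univ_sum_single z, map_sum]
    refine Finset.sum_eq_zero fun j _ => ?_
    by_cases hj : j = σ.onV i
    · subst hj
      exact LinearMap.congr_fun hx (z (σ.onV i))
    · exact hblk i j hj x (z j)
  simpa using congrFun (hnd _ hB) i

lemma finrank_carrier_onV (hnd : Nondeg X B) (hblk : sdOrthBlocks σ X B) (i : Q.V) :
    Module.finrank ℂ (X.carrier (σ.onV i)) = Module.finrank ℂ (X.carrier i) := by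
  have hle : ∀ j, Module.finrank ℂ (X.carrier j) ≤ Module.finrank ℂ (X.carrier (σ.onV j)) :=
    fun j => (LinearMap.finrank_le_finrank_of_injective (pairing_injective hnd hblk j)).trans_eq
      Subspace.dual_finrank_eq
  have h := hle (σ.onV i)
  rw [σ.invV i] at h
  exact le_antisymm h (hle i)

lemma finrank_orthFam_add_finrank (hnd : Nondeg X B) (hblk : sdOrthBlocks σ X B)
    (U : X.SubFam) (i : Q.V) :
    Module.finrank ℂ (orthFam σ X B U i) + Module.finrank ℂ (U (σ.onV i))
      = Module.finrank ℂ (X.carrier i) := by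
  set g := (U (σ.onV i)).dualRestrict ∘ₗ pairing σ B i
  have hsurj : Function.Surjective g := by
    refine Subspace.dualRestrict_surjective.comp
      ((LinearMap.injective_iff_surjective_of_finrank_eq_finrank ?_).1
        (pairing_injective hnd hblk i))
    rw [Subspace.dual_finrank_eq, finrank_carrier_onV hnd hblk]
  have hker : LinearMap.ker g = orthFam σ X B U i := by
    ext x
    simp only [LinearMap.mem_ker, mem_orthFam, DFunLike.ext_iff, g, LinearMap.comp_apply,
      Submodule.dualRestrict_apply, pairing_apply, LinearMap.zero_apply, Subtype.forall]
  have hrk := LinearMap.finrank_range_add_finrank_ker g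
  rw [LinearMap.range_eq_top.2 hsurj, finrank_top, hker, Subspace.dual_finrank_eq] at hrk
  omega

lemma orthFam_orthFam (hB : IsSelfDualForm σ D X B) (U : X.SubFam) :
    orthFam σ X B (orthFam σ X B U) = U := by
  obtain ⟨hnd, hblk, hs, -⟩ := hB
  funext i
  refine (Submodule.eq_of_le_of_finrank_le (le_orthFam_orthFam hs U i) ?_).symm
  have h1 := finrank_orthFam_add_finrank hnd hblk (orthFam σ X B U) i
  have h2 := finrank_orthFam_add_finrank hnd hblk U (σ.onV i)
  rw [σ.invV i, finrank_carrier_onV hnd hblk] at h2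
  omega

variable {θ : (Q.V → ℤ) →+ ℤ}

lemma theta_dimVecZ (hθ : SigmaCompatible σ θ) (hnd : Nondeg X B) (hblk : sdOrthBlocks σ X B) :
    θ X.dimVecZ = 0 := by
  have hσ : (fun i => X.dimVecZ (σ.onV i)) = X.dimVecZ :=
    funext fun i => by simp only [dimVecZ, finrank_carrier_onV hnd hblk]
  have h := hθ X.dimVecZ
  rw [hσ] at h
  omega

lemma theta_dimZ_orthFam (hθ : SigmaCompatible σ θ) (hnd : Nondeg X B)
    (hblk : sdOrthBlocks σ X B) (U : X.SubFam) :
    θ (dimZ (orthFam σ X B U)) = θ (dimZ U) := by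
  have h : dimZ (orthFam σ X B U) = X.dimVecZ - fun i => dimZ U (σ.onV i) := by
    funext i
    have := finrank_orthFam_add_finrank hnd hblk U i
    simp only [dimZ, dimVecZ, Pi.sub_apply]
    omega
  rw [h, map_sub, theta_dimVecZ hθ hnd hblk, hθ, zero_sub, neg_neg]

lemma theta_dimZ_inf_orthFam (hθ : SigmaCompatible σ θ) (hB : IsSelfDualForm σ D X B)
    (U : X.SubFam) : θ (dimZ (U ⊓ orthFam σ X B U)) = θ (dimZ U) := by
  have hperp := theta_dimZ_orthFam hθ hB.1 hB.2.1 U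
  have hsup : θ (dimZ (U ⊔ orthFam σ X B U)) = θ (dimZ (U ⊓ orthFam σ X B U)) := by
    rw [← theta_dimZ_orthFam hθ hB.1 hB.2.1, orthFam_sup, orthFam_orthFam hB, inf_comm]
  have hmod := congrArg θ (dimZ_sup_add_dimZ_inf U (orthFam σ X B U))
  rw [map_add, map_add] at hmod
  omega

lemma slope_dimVecZ_eq_zero (hθ : SigmaCompatible σ θ) (hnd : Nondeg X B)
    (hblk : sdOrthBlocks σ X B) : slope θ X.dimVecZ = 0 := by
  simp [slope, theta_dimVecZ hθ hnd hblk]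

lemma theta_dimZ_nonpos_of_sigmaSemistable (h : SigmaSemistable σ θ X B) {U : X.SubFam}
    (hU : X.IsSubRep U) (hiso : IsotropicFam σ X B U) : θ (dimZ U) ≤ 0 := by
  by_cases hne : U = ⊥
  · simp [hne, dimZ_bot]
  · exact (slope_dimZ_nonpos_iff θ hne).1 (h U hU hiso hne)

end Orthogonal

end QRep

/-- Let `Q` be a finite quiver with involution `σ`, duality structure
`(s, τ)` and σ-compatible stability `θ`.  A self-dual representation `M` (a representation
together with a bilinear form satisfying conditions (i)–(iii) and nondegeneracy) is
σ-semistable if and only if it is semistable as an ordinary representation. -/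
theorem sigmaSemistable_iff_semistable (Q : FinQuiver) (σ : QInv Q) (D : Duality Q σ)
    (θ : (Q.V → ℤ) →+ ℤ) (hθ : QRep.SigmaCompatible σ θ)
    (M : QRep Q) (B : M.Bilin) (hB : QRep.IsSelfDualForm σ D M B) :
    QRep.SigmaSemistable σ θ M B ↔ QRep.Semistable θ M := by
  have ⟨hnd, hblk, _, ha⟩ := hB
  rw [QRep.Semistable, QRep.slope_dimVecZ_eq_zero hθ hnd hblk]
  refine ⟨fun h U hU hne => ?_, fun h U hU _ hne => h U hU hne⟩
  rw [QRep.slope_dimZ_nonpos_iff θ hne, ← QRep.theta_dimZ_inf_orthFam hθ hB]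
  exact QRep.theta_dimZ_nonpos_of_sigmaSemistable h (QRep.isSubRep_inf_orthFam ha hU)
    (QRep.isotropicFam_inf_orthFam U)
end

section
/- Let Q be a finite quiver with involution σ and duality structure (s, τ). Then: (a) the value 𝓔(d) is independent of the choice of the partitions Q_0 = Q_0^- ⊔ Q_0^σ ⊔ Q_0^+ and Q_1 = Q_1^- ⊔ Q_1^σ ⊔ Q_1^+ used in its definition; (b) for all d, d' ∈ ℤ^{Q_0}, 𝓔(d + d') = 𝓔(d) + 𝓔(d') + χ(σ(d), d'), where σ acts on ℤ^{Q_0} by permuting coordinates; (c) χ(σ(d'), σ(d)) = χ(d, d') for all d, d' ∈ ℤ^{Q_0}; in particular the bilinear form (d, d') ↦ χ(σ(d), d') is symmetric. -/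
/-!
For any involution `e` of a finite set and any partition into the fixed points `X^e`, a part
`X⁺` and its image `e(X⁺)`, every sum splits as `∑ h = ∑_{X^e} h + ∑_{X⁺} (h + h ∘ e)`.
For the `σ`-invariant summands `d_{σ(i)} dᵢ` and `d_{σ(s(α))} d_{t(α)}` of `𝓔` this says that
their sums over `Q₀⁺` and `Q₁⁺` are half of a partition-free quantity, which gives (a). The
cross terms of `𝓔(d + d') - 𝓔(d) - 𝓔(d')` are `d_{σ(i)} d'ᵢ` and `d_{σ(s(α))} d'_{t(α)}`,
grouped exactly as in the splitting (on fixed arrows `σ(s(α)) = t(α)`), so they reassemble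
into `χ(σ(d), d')`, which gives (b). Reindexing both sums of `χ` by `σ` gives (c).
-/

open scoped BigOperators

/-- A choice of partitions `Q₀ = Q₀⁻ ⊔ Q₀^σ ⊔ Q₀⁺` and `Q₁ = Q₁⁻ ⊔ Q₁^σ ⊔ Q₁⁺` with
`σ(Q₀⁻) = Q₀⁺` and `σ(Q₁⁻) = Q₁⁺`, encoded by sign functions (`0` on the σ-fixed part,
`±1` on the two swapped parts). -/
structure InvPartition (Q : FinQuiver) (σ : QInv Q) where
  pV : Q.V → ℤ
  pA : Q.A → ℤ
  pV_vals : ∀ i, pV i = 0 ∨ pV i = 1 ∨ pV i = -1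
  pV_zero : ∀ i, pV i = 0 ↔ σ.onV i = i
  pV_neg : ∀ i, pV (σ.onV i) = - pV i
  pA_vals : ∀ a, pA a = 0 ∨ pA a = 1 ∨ pA a = -1
  pA_zero : ∀ a, pA a = 0 ↔ σ.onA a = a
  pA_neg : ∀ a, pA (σ.onA a) = - pA a

/-- The Euler form `χ(d, d') = Σᵢ dᵢ d'ᵢ - Σ_{α : i → j} dᵢ d'ⱼ` of a quiver. -/
def chiZ (Q : FinQuiver) (d d' : Q.V → ℤ) : ℤ :=
  ∑ i, d i * d' i - ∑ a, d (Q.src a) * d' (Q.tgt a)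

/-- The function `𝓔` of a quiver with involution and duality structure, relative to a
choice of partitions of the vertices and arrows:
`𝓔(d) = Σ_{i ∈ Q₀^σ} dᵢ(dᵢ - sᵢ)/2 + Σ_{i ∈ Q₀⁺} d_{σ(i)} dᵢ
 - Σ_{α : σ(i) → i ∈ Q₁^σ} dᵢ(dᵢ + τ_α sᵢ)/2 - Σ_{α : i → j ∈ Q₁⁺} d_{σ(i)} dⱼ`. -/
noncomputable def Efun {Q : FinQuiver} {σ : QInv Q} (D : Duality Q σ)
    (P : InvPartition Q σ) (d : Q.V → ℤ) : ℚ :=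
  (∑ i ∈ Finset.univ.filter (fun i => σ.onV i = i),
      (d i : ℚ) * ((d i : ℚ) - (D.s i : ℚ)) / 2)
  + (∑ i ∈ Finset.univ.filter (fun i => P.pV i = 1), (d (σ.onV i) : ℚ) * (d i : ℚ))
  - (∑ a ∈ Finset.univ.filter (fun a => σ.onA a = a),
      (d (Q.tgt a) : ℚ) * ((d (Q.tgt a) : ℚ) + (D.τ a : ℚ) * (D.s (Q.tgt a) : ℚ)) / 2)
  - (∑ a ∈ Finset.univ.filter (fun a => P.pA a = 1),
      (d (σ.onV (Q.src a)) : ℚ) * (d (Q.tgt a) : ℚ))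

open Finset Function

structure IsSignPartition {α : Type*} (e : α → α) (p : α → ℤ) : Prop where
  eq_zero_or_eq_one_or_eq_neg_one : ∀ x, p x = 0 ∨ p x = 1 ∨ p x = -1
  eq_zero_iff : ∀ x, p x = 0 ↔ e x = x
  comp_eq_neg : ∀ x, p (e x) = -p x

namespace IsSignPartition

variable {α M : Type*} [Fintype α] [AddCommMonoid M] {e : α → α} {p : α → ℤ}

theorem sum_neg_one_eq (hp : IsSignPartition e p) (he : Involutive e) (h : α → M) :
    ∑ x ∈ univ.filter (fun x => p x = -1), h x = ∑ x ∈ univ.filter (fun x => p x = 1), h (e x) := by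
  refine (sum_nbij' e e ?_ ?_ (fun x _ => he x) (fun x _ => he x) (fun _ _ => rfl)).symm
    <;> intro x hx <;> simp only [mem_filter, mem_univ, true_and] at hx ⊢
    <;> simp [hp.comp_eq_neg, hx]

variable [DecidableEq α]

theorem sum_eq (hp : IsSignPartition e p) (he : Involutive e) (h : α → M) :
    ∑ x, h x = ∑ x ∈ univ.filter (fun x => e x = x), h x
      + ∑ x ∈ univ.filter (fun x => p x = 1), (h x + h (e x)) := by
  have hfix : univ.filter (fun x => e x = x) = univ.filter (fun x => p x = 0) :=
    filter_congr fun x _ => (hp.eq_zero_iff x).symm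
  rw [← sum_fiberwise_of_maps_to (t := {0, 1, -1}) (g := p)
      (fun x _ => by simpa using hp.eq_zero_or_eq_one_or_eq_neg_one x),
    sum_add_distrib, hfix, ← hp.sum_neg_one_eq he]
  simp

theorem sum_eq_of_comp_eq (hp : IsSignPartition e p) (he : Involutive e) {g : α → M}
    (hg : ∀ x, g (e x) = g x) :
    ∑ x, g x = ∑ x ∈ univ.filter (fun x => e x = x), g x
      + 2 • ∑ x ∈ univ.filter (fun x => p x = 1), g x := by
  simp only [hp.sum_eq he g, hg, two_nsmul, sum_add_distrib]

theorem sum_one_eq_of_comp_eq [IsCancelAdd M] [IsAddTorsionFree M] {p' : α → ℤ}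
    (hp : IsSignPartition e p) (hp' : IsSignPartition e p') (he : Involutive e) {g : α → M}
    (hg : ∀ x, g (e x) = g x) :
    ∑ x ∈ univ.filter (fun x => p x = 1), g x = ∑ x ∈ univ.filter (fun x => p' x = 1), g x := by
  have h := (hp.sum_eq_of_comp_eq he hg).symm.trans (hp'.sum_eq_of_comp_eq he hg)
  exact nsmul_right_injective two_ne_zero (add_left_cancel h)

end IsSignPartition

theorem InvPartition.isSignPartition_pV {Q : FinQuiver} {σ : QInv Q} (P : InvPartition Q σ) :
    IsSignPartition σ.onV P.pV :=
  ⟨P.pV_vals, P.pV_zero, P.pV_neg⟩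

theorem InvPartition.isSignPartition_pA {Q : FinQuiver} {σ : QInv Q} (P : InvPartition Q σ) :
    IsSignPartition σ.onA P.pA :=
  ⟨P.pA_vals, P.pA_zero, P.pA_neg⟩

namespace QInv

variable {Q : FinQuiver} (σ : QInv Q)

theorem involutive_onV : Involutive σ.onV := σ.invV

theorem involutive_onA : Involutive σ.onA := σ.invA

theorem onV_src_of_onA_eq {a : Q.A} (h : σ.onA a = a) : σ.onV (Q.src a) = Q.tgt a := by
  rw [← h, σ.src_onA, σ.invV, h]

end QInv

section Efun

variable {Q : FinQuiver} {σ : QInv Q}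

theorem Efun_eq_of_partition (D : Duality Q σ) (P P' : InvPartition Q σ) (d : Q.V → ℤ) :
    Efun D P d = Efun D P' d := by
  have hV := P.isSignPartition_pV.sum_one_eq_of_comp_eq P'.isSignPartition_pV
    σ.involutive_onV (g := fun i => (d (σ.onV i) : ℚ) * d i) fun i => by rw [σ.invV, mul_comm]
  have hA := P.isSignPartition_pA.sum_one_eq_of_comp_eq P'.isSignPartition_pA
    σ.involutive_onA (g := fun a => (d (σ.onV (Q.src a)) : ℚ) * d (Q.tgt a))
    fun a => by rw [σ.src_onA, σ.tgt_onA, σ.invV, mul_comm]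
  simp only [Efun, hV, hA]

theorem chiZ_comp_onV (d d' : Q.V → ℤ) :
    chiZ Q (fun i => d' (σ.onV i)) (fun i => d (σ.onV i)) = chiZ Q d d' := by
  unfold chiZ
  congr 1
  · rw [← σ.involutive_onV.bijective.sum_comp]
    simp only [σ.invV, mul_comm]
  · rw [← σ.involutive_onA.bijective.sum_comp]
    simp only [σ.src_onA, σ.tgt_onA, σ.invV, mul_comm]

theorem chiZ_comp_onV_comm (d d' : Q.V → ℤ) :
    chiZ Q (fun i => d (σ.onV i)) d' = chiZ Q (fun i => d' (σ.onV i)) d := by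
  simpa only [σ.invV] using (chiZ_comp_onV (σ := σ) (fun i => d (σ.onV i)) d').symm

theorem Efun_add_sub_sub_eq_sum (D : Duality Q σ) (P : InvPartition Q σ) (d d' : Q.V → ℤ) :
    Efun D P (d + d') - Efun D P d - Efun D P d' =
      ∑ i ∈ univ.filter (fun i => σ.onV i = i), (d (σ.onV i) : ℚ) * d' i
      + ∑ i ∈ univ.filter (fun i => P.pV i = 1),
          ((d (σ.onV i) : ℚ) * d' i + d (σ.onV (σ.onV i)) * d' (σ.onV i))
      - (∑ a ∈ univ.filter (fun a => σ.onA a = a), (d (σ.onV (Q.src a)) : ℚ) * d' (Q.tgt a)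
      + ∑ a ∈ univ.filter (fun a => P.pA a = 1),
          ((d (σ.onV (Q.src a)) : ℚ) * d' (Q.tgt a)
            + d (σ.onV (Q.src (σ.onA a))) * d' (Q.tgt (σ.onA a)))) := by
  set x : Q.V → ℚ := fun i => d i
  set y : Q.V → ℚ := fun i => d' i
  have hV₀ : ∀ i ∈ univ.filter (fun i => σ.onV i = i),
      (x i + y i) * (x i + y i - D.s i) / 2
        = x i * (x i - D.s i) / 2 + y i * (y i - D.s i) / 2 + x (σ.onV i) * y i := by
    intro i hi
    rw [(mem_filter.1 hi).2]
    ring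
  have hV₁ : ∀ i, (x (σ.onV i) + y (σ.onV i)) * (x i + y i) = x (σ.onV i) * x i
      + y (σ.onV i) * y i + (x (σ.onV i) * y i + x (σ.onV (σ.onV i)) * y (σ.onV i)) := by
    intro i
    rw [σ.invV]
    ring
  have hA₀ : ∀ a ∈ univ.filter (fun a => σ.onA a = a),
      (x (Q.tgt a) + y (Q.tgt a)) * (x (Q.tgt a) + y (Q.tgt a) + D.τ a * D.s (Q.tgt a)) / 2
        = x (Q.tgt a) * (x (Q.tgt a) + D.τ a * D.s (Q.tgt a)) / 2
          + y (Q.tgt a) * (y (Q.tgt a) + D.τ a * D.s (Q.tgt a)) / 2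
          + x (σ.onV (Q.src a)) * y (Q.tgt a) := by
    intro a ha
    rw [σ.onV_src_of_onA_eq (mem_filter.1 ha).2]
    ring
  have hA₁ : ∀ a, (x (σ.onV (Q.src a)) + y (σ.onV (Q.src a))) * (x (Q.tgt a) + y (Q.tgt a))
      = x (σ.onV (Q.src a)) * x (Q.tgt a) + y (σ.onV (Q.src a)) * y (Q.tgt a)
        + (x (σ.onV (Q.src a)) * y (Q.tgt a)
          + x (σ.onV (Q.src (σ.onA a))) * y (Q.tgt (σ.onA a))) := by
    intro a
    rw [σ.src_onA, σ.tgt_onA, σ.invV]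
    ring
  simp only [Efun, Pi.add_apply, Int.cast_add]
  rw [sum_congr rfl hV₀, sum_congr rfl fun i _ => hV₁ i, sum_congr rfl hA₀,
    sum_congr rfl fun a _ => hA₁ a]
  simp only [sum_add_distrib]
  ring

theorem Efun_add (D : Duality Q σ) (P : InvPartition Q σ) (d d' : Q.V → ℤ) :
    Efun D P (d + d') = Efun D P d + Efun D P d' + (chiZ Q (fun i => d (σ.onV i)) d' : ℚ) := by
  have hχ : (chiZ Q (fun i => d (σ.onV i)) d' : ℚ)
      = ∑ i, (d (σ.onV i) : ℚ) * d' i - ∑ a, (d (σ.onV (Q.src a)) : ℚ) * d' (Q.tgt a) := by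
    simp [chiZ]
  rw [hχ, P.isSignPartition_pV.sum_eq σ.involutive_onV,
    P.isSignPartition_pA.sum_eq σ.involutive_onA, ← Efun_add_sub_sub_eq_sum]
  ring

end Efun

/-- (a) `𝓔(d)` is independent of the choice of partitions;
(b) `𝓔(d + d') = 𝓔(d) + 𝓔(d') + χ(σ(d), d')`;
(c) `χ(σ(d'), σ(d)) = χ(d, d')`, so `(d, d') ↦ χ(σ(d), d')` is symmetric. -/
theorem Efun_wellDefined_and_chi_symm (Q : FinQuiver) (σ : QInv Q) (D : Duality Q σ) :
    -- (a) independence of the partition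
    (∀ (P P' : InvPartition Q σ) (d : Q.V → ℤ), Efun D P d = Efun D P' d) ∧
    -- (b) 𝓔(d + d') = 𝓔(d) + 𝓔(d') + χ(σ(d), d')
    (∀ (P : InvPartition Q σ) (d d' : Q.V → ℤ),
      Efun D P (d + d') = Efun D P d + Efun D P d'
        + (chiZ Q (fun i => d (σ.onV i)) d' : ℚ)) ∧
    -- (c) χ(σ(d'), σ(d)) = χ(d, d')
    (∀ d d' : Q.V → ℤ,
      chiZ Q (fun i => d' (σ.onV i)) (fun i => d (σ.onV i)) = chiZ Q d d') ∧
    -- in particular (d, d') ↦ χ(σ(d), d') is symmetric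
    (∀ d d' : Q.V → ℤ,
      chiZ Q (fun i => d (σ.onV i)) d' = chiZ Q (fun i => d' (σ.onV i)) d) :=
  ⟨Efun_eq_of_partition D, Efun_add D, chiZ_comp_onV, chiZ_comp_onV_comm⟩
end
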